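/- Let A, X, Z_1, …, Z_K, Γ̃, U be real N×T matrices, β ∈ ℝ, δ ∈ ℝ^K, and C ≥ 0. Suppose Ỹ = Xβ + Σ_{k=1}^K Z_k δ_k + Γ̃ + U, ⟨A, X⟩_F = 1, ⟨A, Z_k⟩_F = 0 for all k = 1, …, K, and ‖Γ̃‖_* ≤ C. Then the augmented linear estimator β̂_A = ⟨A, Ỹ⟩_F satisfies |β̂_A − β − ⟨A, U⟩_F| ≤ C · s_1(A). -/

import Mathlib

open scoped BigOperators

noncomputable section

/-- Frobenius inner product of two real `N × T` matrices. -/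
def finner {N T : ℕ} (A B : Matrix (Fin N) (Fin T) ℝ) : ℝ :=
  ∑ i, ∑ t, A i t * B i t

/-- Frobenius norm of a real `N × T` matrix. -/
def fnorm {N T : ℕ} (A : Matrix (Fin N) (Fin T) ℝ) : ℝ :=
  Real.sqrt (finner A A)

/-- The `j`-th singular value (0-indexed, in decreasing order) of a real `N × T` matrix:
the square root of the `j`-th largest eigenvalue of `A * Aᵀ`; `0` for `j ≥ N`. -/
def sval {N T : ℕ} (A : Matrix (Fin N) (Fin T) ℝ) (j : ℕ) : ℝ :=
  if h : j < N then
    Real.sqrt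
      ((Matrix.isHermitian_mul_conjTranspose_self A).eigenvalues
        (Tuple.sort ((Matrix.isHermitian_mul_conjTranspose_self A).eigenvalues)
          ((⟨j, h⟩ : Fin N).rev)))
  else 0

/-- Spectral norm: the largest singular value. -/
def s1 {N T : ℕ} (A : Matrix (Fin N) (Fin T) ℝ) : ℝ := sval A 0

/-- Nuclear norm: the sum of the singular values. -/
def nucNorm {N T : ℕ} (A : Matrix (Fin N) (Fin T) ℝ) : ℝ :=
  ∑ j ∈ Finset.range N, sval A j

/-! Substituting the model, the constraints `⟨A, X⟩ = 1` and `⟨A, Z_k⟩ = 0` reduce the bias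
`β̂_A − β − ⟨A, U⟩` to `⟨A, Γ̃⟩`, so everything rests on the trace duality
`|⟨A, Γ⟩| ≤ s₁(A) ‖Γ‖_*`. Expanding the Frobenius product in an orthonormal eigenbasis `(u_j)` of
`Γ Γᵀ` gives `⟨A, Γ⟩ = Σ_j ⟨Aᵀ u_j, Γᵀ u_j⟩`, where `‖Γᵀ u_j‖ = √λ_j(Γ Γᵀ)` is a singular value of
`Γ` and `‖Aᵀ u_j‖ ≤ s₁(A)` because `u_jᵀ A Aᵀ u_j` is bounded by the top eigenvalue of `A Aᵀ`
(Rayleigh); Cauchy–Schwarz termwise finishes. -/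

open Matrix
open scoped RealInnerProductSpace

namespace Matrix

variable {m n ι : Type*} [Fintype m] [Fintype n]

theorem transpose_mulVec_dotProduct_self {R : Type*} [CommSemiring R] (A : Matrix m n R)
    (u : m → R) : (Aᵀ *ᵥ u) ⬝ᵥ (Aᵀ *ᵥ u) = u ⬝ᵥ (A * Aᵀ) *ᵥ u := by
  rw [← mulVec_mulVec, dotProduct_mulVec, vecMul_transpose, dotProduct_comm]

theorem abs_dotProduct_le_sqrt_mul_sqrt (x y : n → ℝ) :
    |x ⬝ᵥ y| ≤ √(x ⬝ᵥ x) * √(y ⬝ᵥ y) := by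
  have h := abs_real_inner_le_norm (WithLp.toLp 2 x : EuclideanSpace ℝ n) (WithLp.toLp 2 y)
  simpa [EuclideanSpace.norm_eq, EuclideanSpace.inner_toLp_toLp, dotProduct, sq, mul_comm] using h

theorem sum_transpose_mulVec_dotProduct [Fintype ι] (b : OrthonormalBasis ι ℝ (EuclideanSpace ℝ m))
    (A B : Matrix m n ℝ) :
    ∑ j, (Aᵀ *ᵥ ⇑(b j)) ⬝ᵥ (Bᵀ *ᵥ ⇑(b j)) = ∑ i, ∑ t, A i t * B i t := by
  let col (M : Matrix m n ℝ) (t : n) : EuclideanSpace ℝ m := WithLp.toLp 2 (Mᵀ t)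
  have hcol : ∀ M t j, (Mᵀ *ᵥ ⇑(b j)) t = ⟪col M t, b j⟫ := fun M t j => by
    simp [col, mulVec, dotProduct, PiLp.inner_apply, mul_comm]
  calc ∑ j, (Aᵀ *ᵥ ⇑(b j)) ⬝ᵥ (Bᵀ *ᵥ ⇑(b j))
      = ∑ t, ∑ j, ⟪col A t, b j⟫ * ⟪b j, col B t⟫ := by
        simp only [dotProduct, hcol, real_inner_comm (b _)]
        exact Finset.sum_comm
    _ = ∑ t, ⟪col A t, col B t⟫ := by simp only [b.sum_inner_mul_inner]
    _ = ∑ i, ∑ t, A i t * B i t := by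
        simp only [col, EuclideanSpace.inner_toLp_toLp, dotProduct, transpose_apply, star_trivial]
        rw [Finset.sum_comm]
        simp only [mul_comm]

variable [DecidableEq m]

theorem IsHermitian.dotProduct_mulVec_le {M : Matrix m m ℝ} (hM : M.IsHermitian) {c : ℝ}
    (hc : ∀ i, hM.eigenvalues i ≤ c) (x : m → ℝ) : x ⬝ᵥ M *ᵥ x ≤ c * (x ⬝ᵥ x) := by
  set b := hM.eigenvectorBasis
  set y : EuclideanSpace ℝ m := WithLp.toLp 2 x
  have hsymm : Mᵀ = M := by simpa [conjTranspose_eq_transpose_of_trivial] using hM.eq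
  have hcoord : ∀ l, ⟪b l, WithLp.toLp 2 (M *ᵥ x)⟫ = hM.eigenvalues l * ⟪b l, y⟫ := fun l => by
    simp only [EuclideanSpace.inner_eq_star_dotProduct, star_trivial, y]
    rw [dotProduct_comm, dotProduct_mulVec, ← mulVec_transpose, hsymm, hM.mulVec_eigenvectorBasis,
      smul_dotProduct, smul_eq_mul, dotProduct_comm x]
  have hsq : ∀ l, 0 ≤ ⟪y, b l⟫ * ⟪b l, y⟫ := fun l => by
    rw [real_inner_comm]; exact mul_self_nonneg _
  calc x ⬝ᵥ M *ᵥ x = ∑ l, ⟪y, b l⟫ * ⟪b l, WithLp.toLp 2 (M *ᵥ x)⟫ := by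
        rw [b.sum_inner_mul_inner, EuclideanSpace.inner_toLp_toLp, star_trivial, dotProduct_comm]
    _ = ∑ l, hM.eigenvalues l * (⟪y, b l⟫ * ⟪b l, y⟫) := by
        simp only [hcoord]; exact Finset.sum_congr rfl fun l _ => by ring
    _ ≤ ∑ l, c * (⟪y, b l⟫ * ⟪b l, y⟫) :=
        Finset.sum_le_sum fun l _ => mul_le_mul_of_nonneg_right (hc l) (hsq l)
    _ = c * (x ⬝ᵥ x) := by
        rw [← Finset.mul_sum, b.sum_inner_mul_inner, EuclideanSpace.inner_toLp_toLp, star_trivial]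

theorem abs_sum_mul_le_mul_sum_sqrt_eigenvalues {A Γ : Matrix m n ℝ} {s : ℝ}
    (hs : 0 ≤ s) (hA : ∀ i, (isHermitian_mul_conjTranspose_self A).eigenvalues i ≤ s ^ 2) :
    |∑ i, ∑ t, A i t * Γ i t| ≤
      s * ∑ j, √((isHermitian_mul_conjTranspose_self Γ).eigenvalues j) := by
  set hΓ := isHermitian_mul_conjTranspose_self Γ
  set b := hΓ.eigenvectorBasis
  have hunit : ∀ j, ⇑(b j) ⬝ᵥ ⇑(b j) = 1 := fun j => by
    have h := real_inner_self_eq_norm_sq (b j)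
    rwa [b.orthonormal.1 j, one_pow, EuclideanSpace.inner_eq_star_dotProduct, star_trivial] at h
  have hAb : ∀ j, (Aᵀ *ᵥ ⇑(b j)) ⬝ᵥ (Aᵀ *ᵥ ⇑(b j)) ≤ s ^ 2 := fun j => by
    simpa [transpose_mulVec_dotProduct_self, hunit, conjTranspose_eq_transpose_of_trivial] using
      (isHermitian_mul_conjTranspose_self A).dotProduct_mulVec_le hA (b j)
  have hΓb : ∀ j, (Γᵀ *ᵥ ⇑(b j)) ⬝ᵥ (Γᵀ *ᵥ ⇑(b j)) = hΓ.eigenvalues j := fun j => by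
    have : (Γ * Γᵀ) *ᵥ ⇑(b j) = hΓ.eigenvalues j • ⇑(b j) := hΓ.mulVec_eigenvectorBasis j
    rw [transpose_mulVec_dotProduct_self, this, dotProduct_smul, hunit, smul_eq_mul, mul_one]
  calc |∑ i, ∑ t, A i t * Γ i t| = |∑ j, (Aᵀ *ᵥ ⇑(b j)) ⬝ᵥ (Γᵀ *ᵥ ⇑(b j))| := by
        rw [sum_transpose_mulVec_dotProduct]
    _ ≤ ∑ j, |(Aᵀ *ᵥ ⇑(b j)) ⬝ᵥ (Γᵀ *ᵥ ⇑(b j))| := Finset.abs_sum_le_sum_abs _ _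
    _ ≤ ∑ j, √(s ^ 2) * √(hΓ.eigenvalues j) := Finset.sum_le_sum fun j _ =>
        (abs_dotProduct_le_sqrt_mul_sqrt _ _).trans <| by
          rw [hΓb]; gcongr; exact hAb j
    _ = s * ∑ j, √(hΓ.eigenvalues j) := by rw [Real.sqrt_sq hs, Finset.mul_sum]

end Matrix

section FrobeniusInner

variable {N T : ℕ}

theorem finner_add_right (A B C : Matrix (Fin N) (Fin T) ℝ) :
    finner A (B + C) = finner A B + finner A C := by
  simp only [finner, Matrix.add_apply, mul_add, Finset.sum_add_distrib]

theorem finner_smul_right (A B : Matrix (Fin N) (Fin T) ℝ) (c : ℝ) :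
    finner A (c • B) = c * finner A B := by
  simp only [finner, Matrix.smul_apply, smul_eq_mul, Finset.mul_sum, mul_left_comm]

theorem finner_sum_right {K : ℕ} (A : Matrix (Fin N) (Fin T) ℝ)
    (M : Fin K → Matrix (Fin N) (Fin T) ℝ) :
    finner A (∑ k, M k) = ∑ k, finner A (M k) := by
  simp only [finner, Matrix.sum_apply, Finset.mul_sum]
  calc _ = ∑ i, ∑ k, ∑ t, A i t * M k i t := Finset.sum_congr rfl fun i _ => Finset.sum_comm
    _ = _ := Finset.sum_comm

theorem sval_nonneg (A : Matrix (Fin N) (Fin T) ℝ) (j : ℕ) : 0 ≤ sval A j := by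
  unfold sval
  split_ifs
  exacts [Real.sqrt_nonneg _, le_rfl]

theorem eigenvalues_le_s1_sq (A : Matrix (Fin N) (Fin T) ℝ) (i : Fin N) :
    (isHermitian_mul_conjTranspose_self A).eigenvalues i ≤ s1 A ^ 2 := by
  set μ := (isHermitian_mul_conjTranspose_self A).eigenvalues
  set σ := Tuple.sort μ
  have hN : 0 < N := i.pos
  -- `Tuple.sort` sorts increasingly, so `s1` reads off the last entry
  have hs1 : s1 A ^ 2 = μ (σ (⟨0, hN⟩ : Fin N).rev) := by
    rw [s1, sval, dif_pos hN, Real.sq_sqrt (eigenvalues_self_mul_conjTranspose_nonneg A _)]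
  have hle : σ.symm i ≤ (⟨0, hN⟩ : Fin N).rev := by
    simp only [Fin.le_def, Fin.val_rev]
    omega
  calc μ i = μ (σ (σ.symm i)) := by rw [σ.apply_symm_apply]
    _ ≤ μ (σ (⟨0, hN⟩ : Fin N).rev) := Tuple.monotone_sort μ hle
    _ = s1 A ^ 2 := hs1.symm

theorem nucNorm_eq_sum_sqrt_eigenvalues (A : Matrix (Fin N) (Fin T) ℝ) :
    nucNorm A = ∑ i, √((isHermitian_mul_conjTranspose_self A).eigenvalues i) := by
  set μ := (isHermitian_mul_conjTranspose_self A).eigenvalues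
  have hsval : ∀ j : Fin N, sval A j = √(μ (Tuple.sort μ j.rev)) := fun j => by
    rw [sval, dif_pos j.isLt]
  rw [nucNorm, ← Fin.sum_univ_eq_sum_range, Finset.sum_congr rfl fun j _ => hsval j]
  exact Equiv.sum_comp (Fin.revPerm.trans (Tuple.sort μ)) (fun i => √(μ i))

theorem abs_finner_le_nucNorm_mul_s1 (A Γ : Matrix (Fin N) (Fin T) ℝ) :
    |finner A Γ| ≤ nucNorm Γ * s1 A := by
  rw [nucNorm_eq_sum_sqrt_eigenvalues, mul_comm]
  exact abs_sum_mul_le_mul_sum_sqrt_eigenvalues (sval_nonneg A 0) (eigenvalues_le_s1_sq A)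

end FrobeniusInner

theorem augmented_linear_estimator_bias_bound_general {N T K : ℕ}
    (A X : Matrix (Fin N) (Fin T) ℝ) (Z : Fin K → Matrix (Fin N) (Fin T) ℝ)
    (Γtil U Ytil : Matrix (Fin N) (Fin T) ℝ)
    (β : ℝ) (δ : Fin K → ℝ) (C : ℝ)
    (hY : Ytil = β • X + ∑ k, δ k • Z k + Γtil + U)
    (hAX : finner A X = 1) (hAZ : ∀ k, finner A (Z k) = 0)
    (hΓ : nucNorm Γtil ≤ C) :
    |finner A Ytil - β - finner A U| ≤ C * s1 A := by
  have hbias : finner A Ytil - β - finner A U = finner A Γtil := by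
    simp only [hY, finner_add_right, finner_smul_right, finner_sum_right, hAX, hAZ, mul_zero,
      Finset.sum_const_zero]
    ring
  rw [hbias]
  calc |finner A Γtil| ≤ nucNorm Γtil * s1 A := abs_finner_le_nucNorm_mul_s1 A Γtil
    _ ≤ C * s1 A := mul_le_mul_of_nonneg_right hΓ (sval_nonneg A 0)

/-- If `Ỹ = Xβ + Σ_k Z_k δ_k + Γ̃ + U`, the weights satisfy `⟨A,X⟩_F = 1` and `⟨A,Z_k⟩_F = 0`,
and `‖Γ̃‖_* ≤ C`, then the augmented linear estimator `β̂_A = ⟨A,Ỹ⟩_F` satisfies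
`|β̂_A − β − ⟨A,U⟩_F| ≤ C · s₁(A)`. -/
theorem augmented_linear_estimator_bias_bound {N T K : ℕ}
    (A X : Matrix (Fin N) (Fin T) ℝ) (Z : Fin K → Matrix (Fin N) (Fin T) ℝ)
    (Γtil U Ytil : Matrix (Fin N) (Fin T) ℝ)
    (β : ℝ) (δ : Fin K → ℝ) (C : ℝ) (hC : 0 ≤ C)
    (hY : Ytil = β • X + ∑ k, δ k • Z k + Γtil + U)
    (hAX : finner A X = 1) (hAZ : ∀ k, finner A (Z k) = 0)
    (hΓ : nucNorm Γtil ≤ C) :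
    |finner A Ytil - β - finner A U| ≤ C * s1 A :=
  augmented_linear_estimator_bias_bound_general A X Z Γtil U Ytil β δ C hY hAX hAZ hΓ

end
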